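/- arXiv:2604.06325 — 3 statements merged into one kernel-verified Lean document; each statement's English description precedes it below -/
import Mathlib

section
/- No linear positive map Q : L(H_O^{⊗k}) → L(H_B ⊗ H_E) (for any finite k ≥ 1) can simultaneously satisfy: (i) Q(|ψ₀⟩⟨ψ₀|^{⊗k}) = p₀ · |ψ₀⟩⟨ψ₀| ⊗ |φ₀⟩⟨φ₀| with p₀ > 0, for some fixed pure states ψ₀ on H_O and φ₀ on H_E; and (ii) Q((q|ψ₀⟩⟨ψ₀| + (1-q)|ψ₁⟩⟨ψ₁|)^{⊗k}) = p₀₁ · |φ₀₁⟩⟨φ₀₁| with p₀₁ > 0 and Tr_E |φ₀₁⟩⟨φ₀₁| = q|ψ₀⟩⟨ψ₀| + (1-q)|ψ₁⟩⟨ψ₁|, where ψ₁ ≠ ψ₀ is a pure state on H_O, q ∈ (0,1), H_B ≅ H_O, and |φ₀₁⟩ ∈ H_B ⊗ H_E is a unit vector. -/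
open scoped BigOperators ComplexOrder Kronecker

/-- The outer product `|v⟩⟨v|` as a matrix. -/
noncomputable def outerMat {n : Type*} (v : n → ℂ) : Matrix n n ℂ :=
  Matrix.vecMulVec v (star v)

/-- Partial trace over the second tensor factor. -/
noncomputable def ptrace2 {α β : Type*} [Fintype β] (M : Matrix (α × β) (α × β) ℂ) :
    Matrix α α ℂ :=
  Matrix.of fun i j => ∑ e : β, M (i, e) (j, e)

/-- The `k`-fold tensor power of a matrix on `O`, as a matrix on `Fin k → O`. -/
noncomputable def tensorPow {O : Type*} (k : ℕ) (M : Matrix O O ℂ) :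
    Matrix (Fin k → O) (Fin k → O) ℂ :=
  Matrix.of fun f g => ∏ i : Fin k, M (f i) (g i)

/-!
Expanding `(q|ψ₀⟩⟨ψ₀| + (1-q)|ψ₁⟩⟨ψ₁|)^{⊗k}` by multilinearity shows that it dominates
`q^k |ψ₀⟩⟨ψ₀|^{⊗k}` in the Loewner order, so positivity of `Q` gives
`p₀₁ |φ₀₁⟩⟨φ₀₁| ≥ q^k p₀ |ψ₀ ⊗ φ₀⟩⟨ψ₀ ⊗ φ₀|`. A rank-one operator dominates another one only if
their vectors are parallel, so `φ₀₁` is a phase times `ψ₀ ⊗ φ₀`. But then its partial trace is the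
pure state `|ψ₀⟩⟨ψ₀|`, not the mixture.
-/

open Matrix

section

variable {n : Type*}

lemma outerMat_posSemidef [Fintype n] (v : n → ℂ) : (outerMat v).PosSemidef :=
  posSemidef_vecMulVec_self_star v

lemma outerMat_smul (c : ℂ) (v : n → ℂ) :
    outerMat (c • v) = ((‖c‖ ^ 2 : ℝ) : ℂ) • outerMat v := by
  rw [outerMat, outerMat, star_smul, smul_vecMulVec, vecMulVec_smul, smul_smul,
    Complex.ofReal_pow, ← Complex.mul_conj', Complex.star_def]

lemma ofReal_smul_outerMat {r : ℝ} (hr : 0 ≤ r) (v : n → ℂ) :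
    (r : ℂ) • outerMat v = outerMat (((√r : ℝ) : ℂ) • v) := by
  rw [outerMat_smul, Complex.norm_real, Real.norm_of_nonneg (Real.sqrt_nonneg r),
    Real.sq_sqrt hr]

lemma star_dotProduct_outerMat_mulVec [Fintype n] (v x : n → ℂ) :
    star x ⬝ᵥ (outerMat v *ᵥ x) = ((‖star v ⬝ᵥ x‖ ^ 2 : ℝ) : ℂ) := by
  rw [outerMat, vecMulVec_mulVec, op_smul_eq_smul, dotProduct_smul, smul_eq_mul,
    star_dotProduct (v := x), Complex.ofReal_pow, ← Complex.mul_conj', Complex.star_def]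

lemma star_dotProduct_self_eq_sum_norm_sq [Fintype n] (v : n → ℂ) :
    star v ⬝ᵥ v = ((∑ i, ‖v i‖ ^ 2 : ℝ) : ℂ) := by
  simp only [dotProduct, Pi.star_apply, Complex.star_def, Complex.conj_mul', Complex.ofReal_sum,
    Complex.ofReal_pow]

/-- Test the positivity against the component of `w` orthogonal to `φ`. -/
lemma exists_eq_smul_of_posSemidef_smul_outerMat_sub [Fintype n] {a : ℂ} {b : ℝ} (hb : 0 < b)
    {φ w : n → ℂ} (h : (a • outerMat φ - (b : ℂ) • outerMat w).PosSemidef) :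
    ∃ c : ℂ, w = c • φ := by
  set c := (star φ ⬝ᵥ w) / (star φ ⬝ᵥ φ)
  set x := w - c • φ
  have hφx : star φ ⬝ᵥ x = 0 := by
    rcases eq_or_ne φ 0 with rfl | hφ
    · simp
    have : star φ ⬝ᵥ φ ≠ 0 := dotProduct_star_self_eq_zero.not.mpr hφ
    simp only [x, c, dotProduct_sub, dotProduct_smul, smul_eq_mul]
    field_simp
    ring
  have hwx : star w ⬝ᵥ x = 0 := by
    have hx := h.dotProduct_mulVec_nonneg x
    rw [sub_mulVec, dotProduct_sub, smul_mulVec, smul_mulVec, dotProduct_smul, dotProduct_smul,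
      star_dotProduct_outerMat_mulVec, star_dotProduct_outerMat_mulVec, hφx, norm_zero] at hx
    have hle : ((b * ‖star w ⬝ᵥ x‖ ^ 2 : ℝ) : ℂ) ≤ 0 := by simpa using hx
    have : b * ‖star w ⬝ᵥ x‖ ^ 2 ≤ 0 := by exact_mod_cast hle
    simpa [hb.ne'] using le_antisymm (nonpos_of_mul_nonpos_right this hb) (sq_nonneg _)
  have hxx : star x ⬝ᵥ x = 0 := by
    rw [show star x = star w - star c • star φ by simp [x, star_smul], sub_dotProduct,
      smul_dotProduct, hwx, hφx, smul_zero, sub_zero]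
  exact ⟨c, sub_eq_zero.mp (dotProduct_star_self_eq_zero.mp hxx)⟩

end

section

variable {α β : Type*}

lemma outerMat_kronecker (u : α → ℂ) (v : β → ℂ) :
    outerMat u ⊗ₖ outerMat v = outerMat fun p : α × β => u p.1 * v p.2 := by
  ext ⟨i, e⟩ ⟨j, f⟩
  simp only [outerMat, kroneckerMap_apply, vecMulVec_apply, Pi.star_apply, star_mul']
  ring

lemma ptrace2_outerMat_mul [Fintype β] (u : α → ℂ) (v : β → ℂ) :
    ptrace2 (outerMat fun p : α × β => u p.1 * v p.2) =
      ((∑ e, ‖v e‖ ^ 2 : ℝ) : ℂ) • outerMat u := by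
  ext i j
  simp only [ptrace2, outerMat, of_apply, vecMulVec_apply, Matrix.smul_apply, smul_eq_mul,
    Pi.star_apply, star_mul', ← star_dotProduct_self_eq_sum_norm_sq, dotProduct, Finset.sum_mul]
  refine Finset.sum_congr rfl fun e _ => ?_
  ring

lemma sum_norm_sq_mul [Fintype α] [Fintype β] (u : α → ℂ) (v : β → ℂ) :
    ∑ p : α × β, ‖u p.1 * v p.2‖ ^ 2 = (∑ i, ‖u i‖ ^ 2) * ∑ e, ‖v e‖ ^ 2 := by
  simp only [norm_mul, mul_pow, Fintype.sum_prod_type, Finset.sum_mul_sum]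

end

section

variable {O : Type*} (k : ℕ)

lemma tensorPow_smul (c : ℂ) (M : Matrix O O ℂ) : tensorPow k (c • M) = c ^ k • tensorPow k M := by
  ext f g
  simp only [tensorPow, of_apply, Matrix.smul_apply, smul_eq_mul, Finset.prod_mul_distrib,
    Finset.prod_const, Finset.card_univ, Fintype.card_fin]

lemma tensorPow_outerMat (v : O → ℂ) :
    tensorPow k (outerMat v) = outerMat fun f : Fin k → O => ∏ i, v (f i) := by
  ext f g
  simp only [tensorPow, outerMat, of_apply, vecMulVec_apply, Pi.star_apply, star_prod,
    Finset.prod_mul_distrib]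

lemma tensorPow_outerMat_add_outerMat (u v : O → ℂ) :
    tensorPow k (outerMat u + outerMat v) =
      ∑ t : Finset (Fin k), outerMat fun f => (∏ i ∈ t, u (f i)) * ∏ i ∈ tᶜ, v (f i) := by
  ext f g
  simp only [tensorPow, outerMat, of_apply, Matrix.add_apply, Matrix.sum_apply, vecMulVec_apply,
    Pi.star_apply, star_mul', star_prod, Finset.compl_eq_univ_sdiff]
  rw [Finset.prod_add, Finset.powerset_univ]
  refine Finset.sum_congr rfl fun t _ => ?_
  rw [Finset.prod_mul_distrib, Finset.prod_mul_distrib]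
  ring

lemma posSemidef_tensorPow_outerMat_add_sub [Fintype O] (u v : O → ℂ) :
    (tensorPow k (outerMat u + outerMat v) - tensorPow k (outerMat u)).PosSemidef := by
  classical
  rw [tensorPow_outerMat_add_outerMat, ← Finset.add_sum_erase _ _ (Finset.mem_univ Finset.univ),
    tensorPow_outerMat]
  simp only [Finset.compl_univ, Finset.prod_empty, mul_one, add_sub_cancel_left]
  exact posSemidef_sum _ fun t _ => outerMat_posSemidef _

end

theorem stmt2_general {O E : Type*} [Fintype O] [Fintype E]
    (k : ℕ)
    (Q : Matrix (Fin k → O) (Fin k → O) ℂ →ₗ[ℂ] Matrix (O × E) (O × E) ℂ)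
    (hQpos : ∀ M, M.PosSemidef → (Q M).PosSemidef)
    (ψ₀ ψ₁ : O → ℂ)
    (hψ₀ : ∑ i, ‖ψ₀ i‖ ^ 2 = 1)
    (hne : outerMat ψ₀ ≠ outerMat ψ₁)
    (φ₀ : E → ℂ) (hφ₀ : ∑ e, ‖φ₀ e‖ ^ 2 = 1)
    (φ₀₁ : O × E → ℂ) (hφ₀₁ : ∑ x, ‖φ₀₁ x‖ ^ 2 = 1)
    (q : ℝ) (hq : q ∈ Set.Ioo (0:ℝ) 1)
    (p₀ p₀₁ : ℝ) (hp₀ : 0 < p₀)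
    (h1 : Q (tensorPow k (outerMat ψ₀)) =
      (p₀ : ℂ) • (outerMat ψ₀ ⊗ₖ outerMat φ₀))
    (h2 : Q (tensorPow k ((q : ℂ) • outerMat ψ₀ + ((1 - q : ℝ) : ℂ) • outerMat ψ₁)) =
      (p₀₁ : ℂ) • outerMat φ₀₁)
    (h3 : ptrace2 (outerMat φ₀₁) =
      (q : ℂ) • outerMat ψ₀ + ((1 - q : ℝ) : ℂ) • outerMat ψ₁) :
    False := by
  obtain ⟨hq0, hq1⟩ := hq
  have hmix := posSemidef_tensorPow_outerMat_add_sub k ((√q : ℂ) • ψ₀) ((√(1 - q) : ℂ) • ψ₁)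
  rw [← ofReal_smul_outerMat hq0.le, ← ofReal_smul_outerMat (by linarith), tensorPow_smul] at hmix
  have hdom := hQpos _ hmix
  rw [map_sub, map_smul, h1, h2, smul_smul, outerMat_kronecker, ← Complex.ofReal_pow,
    ← Complex.ofReal_mul] at hdom
  obtain ⟨c, hc⟩ := exists_eq_smul_of_posSemidef_smul_outerMat_sub (by positivity) hdom
  have hc1 : ‖c‖ ^ 2 = 1 := by
    have hnorm := congrArg (fun v => ∑ x, ‖v x‖ ^ 2) hc
    dsimp only at hnorm
    rw [sum_norm_sq_mul, hψ₀, hφ₀, one_mul] at hnorm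
    simpa only [Pi.smul_apply, smul_eq_mul, norm_mul, mul_pow, ← Finset.mul_sum, hφ₀₁, mul_one,
      eq_comm] using hnorm
  have hpt : ptrace2 (outerMat φ₀₁) = outerMat ψ₀ := by
    calc ptrace2 (outerMat φ₀₁) = ptrace2 (outerMat (c • φ₀₁)) := by
          rw [outerMat_smul, hc1, Complex.ofReal_one, one_smul]
      _ = outerMat ψ₀ := by rw [← hc, ptrace2_outerMat_mul, hφ₀, Complex.ofReal_one, one_smul]
  have hsmul : ((1 - q : ℝ) : ℂ) • outerMat ψ₀ = ((1 - q : ℝ) : ℂ) • outerMat ψ₁ := by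
    rw [hpt] at h3
    linear_combination (norm := module) h3
  exact hne (smul_right_injective _ (Complex.ofReal_ne_zero.mpr (by linarith)) hsmul)

/-- No-go theorem for probabilistic exact non-universal many-copy purification:
no linear positive map `Q : L(H_O^{⊗k}) → L(H_B ⊗ H_E)` can purify, with nonzero
probability, both the pure state `ψ₀` and the rank-two mixture
`q|ψ₀⟩⟨ψ₀| + (1-q)|ψ₁⟩⟨ψ₁]`. -/
theorem stmt2 {O E : Type*} [Fintype O] [Fintype E] [DecidableEq O] [DecidableEq E]
    (k : ℕ) (hk : 1 ≤ k)
    (Q : Matrix (Fin k → O) (Fin k → O) ℂ →ₗ[ℂ] Matrix (O × E) (O × E) ℂ)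
    (hQpos : ∀ M, M.PosSemidef → (Q M).PosSemidef)
    (ψ₀ ψ₁ : O → ℂ)
    (hψ₀ : ∑ i, ‖ψ₀ i‖ ^ 2 = 1) (hψ₁ : ∑ i, ‖ψ₁ i‖ ^ 2 = 1)
    (hne : outerMat ψ₀ ≠ outerMat ψ₁)
    (φ₀ : E → ℂ) (hφ₀ : ∑ e, ‖φ₀ e‖ ^ 2 = 1)
    (φ₀₁ : O × E → ℂ) (hφ₀₁ : ∑ x, ‖φ₀₁ x‖ ^ 2 = 1)
    (q : ℝ) (hq : q ∈ Set.Ioo (0:ℝ) 1)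
    (p₀ p₀₁ : ℝ) (hp₀ : 0 < p₀) (hp₀₁ : 0 < p₀₁)
    (h1 : Q (tensorPow k (outerMat ψ₀)) =
      (p₀ : ℂ) • (outerMat ψ₀ ⊗ₖ outerMat φ₀))
    (h2 : Q (tensorPow k ((q : ℂ) • outerMat ψ₀ + ((1 - q : ℝ) : ℂ) • outerMat ψ₁)) =
      (p₀₁ : ℂ) • outerMat φ₀₁)
    (h3 : ptrace2 (outerMat φ₀₁) =
      (q : ℂ) • outerMat ψ₀ + ((1 - q : ℝ) : ℂ) • outerMat ψ₁) :
    False :=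
  stmt2_general k Q hQpos ψ₀ ψ₁ hψ₀ hne φ₀ hφ₀ φ₀₁ hφ₀₁ q hq p₀ p₀₁ hp₀ h1 h2 h3
end

section
/- There is no linear map Q : L(H_I ⊗ H_O) → L(H_I ⊗ H_O ⊗ H_E) such that for every Choi operator C of a quantum channel (i.e., every positive semidefinite C with Tr_O C = 1_I), Q(C) is a rank-one positive semidefinite operator satisfying Tr_E Q(C) = C, provided dim H_O ≥ 2 and dim H_E ≥ 2. -/
open scoped BigOperators ComplexOrder

/-- The trace is preserved by `ptrace2`. -/
lemma trace_ptrace2 {α β : Type*} [Fintype α] [Fintype β]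
    (M : Matrix (α × β) (α × β) ℂ) : (ptrace2 M).trace = M.trace := by
  simp [ptrace2, Matrix.trace, Matrix.diag, Fintype.sum_prod_type]

/-- A Hermitian matrix of rank one squares to its trace times itself. -/
lemma sq_eq_trace_smul_of_rank_one {n : Type*} [Fintype n] [DecidableEq n]
    {M : Matrix n n ℂ} (hH : M.IsHermitian) (hr : M.rank = 1) :
    M * M = M.trace • M := by
  classical
  set U : Matrix n n ℂ := (Matrix.IsHermitian.eigenvectorUnitary hH : Matrix n n ℂ) with hU
  set d : n → ℂ := fun i => ((hH.eigenvalues i : ℝ) : ℂ) with hd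
  have hspec : M = U * Matrix.diagonal d * star U := hH.spectral_theorem
  have hUU : star U * U = 1 := Unitary.coe_star_mul_self _
  have hcard : Fintype.card {i // hH.eigenvalues i ≠ 0} = 1 := by
    rw [← hH.rank_eq_card_non_zero_eigs]; exact hr
  obtain ⟨x, hx⟩ := Fintype.card_eq_one_iff.mp hcard
  have htr : M.trace = ∑ i, d i := by
    rw [hspec, Matrix.trace_mul_cycle, hUU, Matrix.one_mul, Matrix.trace_diagonal]
  have hzero : ∀ j, j ≠ (x : n) → d j = 0 := by
    intro j hj
    by_contra h
    have hj' : hH.eigenvalues j ≠ 0 := by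
      intro h0; apply h; simp [hd, h0]
    exact hj (congrArg Subtype.val (hx ⟨j, hj'⟩))
  have hsum : ∑ i, d i = d x := by
    rw [Finset.sum_eq_single (x : n)]
    · intro b _ hb; exact hzero b hb
    · intro hxmem; exact absurd (Finset.mem_univ _) hxmem
  have hkey : ∀ i, d i * d i = M.trace * d i := by
    intro i
    rcases eq_or_ne i (x : n) with h | h
    · subst h; rw [htr, hsum]
    · rw [hzero i h, mul_zero, mul_zero]
  have hdd : (Matrix.diagonal d) * (Matrix.diagonal d) = M.trace • Matrix.diagonal d := by
    rw [Matrix.diagonal_mul_diagonal]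
    ext i j
    rcases eq_or_ne i j with h | h
    · subst h
      simp [Matrix.smul_apply, smul_eq_mul, hkey i]
    · simp [Matrix.diagonal_apply_ne _ h]
  calc M * M = U * Matrix.diagonal d * (star U * U) * Matrix.diagonal d * star U := by
        rw [hspec]; noncomm_ring
    _ = U * ((Matrix.diagonal d) * (Matrix.diagonal d)) * star U := by
        rw [hUU]; noncomm_ring
    _ = U * (M.trace • Matrix.diagonal d) * star U := by rw [hdd]
    _ = M.trace • (U * Matrix.diagonal d * star U) := by
        rw [Matrix.mul_smul, Matrix.smul_mul]
    _ = M.trace • M := by rw [← hspec]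

/-- If the Frobenius norm of a complex matrix vanishes, the matrix is zero. -/
lemma eq_zero_of_trace_conjTranspose_mul_self {n : Type*} [Fintype n] [DecidableEq n]
    (H : Matrix n n ℂ) (h : (Matrix.conjTranspose H * H).trace = 0) : H = 0 := by
  classical
  have h' : ((∑ j : n, ∑ i : n, Complex.normSq (H i j) : ℝ) : ℂ) = 0 := by
    rw [← h]
    simp only [Matrix.trace, Matrix.diag, Matrix.mul_apply, Matrix.conjTranspose_apply]
    push_cast
    congr 1
    funext j
    congr 1
    funext i
    rw [Complex.normSq_eq_conj_mul_self]
    rfl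
  have hS : (∑ j : n, ∑ i : n, Complex.normSq (H i j) : ℝ) = 0 := by exact_mod_cast h'
  have hall := (Finset.sum_eq_zero_iff_of_nonneg (fun j _ =>
    Finset.sum_nonneg fun i _ => Complex.normSq_nonneg (H i j))).mp hS
  ext i j
  have := (Finset.sum_eq_zero_iff_of_nonneg
    (fun i _ => Complex.normSq_nonneg (H i j))).mp
    (hall j (Finset.mem_univ _)) i (Finset.mem_univ _)
  simpa [Complex.normSq_eq_zero] using this

/-- Impossibility of deterministic exact universal purification: there is no linear map
`Q : L(H_I ⊗ H_O) → L(H_I ⊗ H_O ⊗ H_E)` such that for every Choi operator `C` of a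
channel, `Q C` is a rank-one positive semidefinite operator with `Tr_E (Q C) = C`,
provided `dim H_O ≥ 2` and `dim H_E ≥ 2`. -/
theorem stmt4 {I O E : Type*} [Fintype I] [Fintype O] [Fintype E]
    [DecidableEq I] [DecidableEq O] [DecidableEq E] [Nonempty I]
    (hO : 2 ≤ Fintype.card O) (hE : 2 ≤ Fintype.card E)
    (Q : Matrix (I × O) (I × O) ℂ →ₗ[ℂ] Matrix ((I × O) × E) ((I × O) × E) ℂ)
    (hQ : ∀ C : Matrix (I × O) (I × O) ℂ, C.PosSemidef → ptrace2 C = 1 →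
      (Q C).PosSemidef ∧ (Q C).rank = 1 ∧ ptrace2 (Q C) = C) :
    False := by
  classical
  obtain ⟨o₀, o₁, ho⟩ := Fintype.exists_pair_of_one_lt_card (by omega : 1 < Fintype.card O)
  set C0 : Matrix (I × O) (I × O) ℂ :=
    Matrix.diagonal (fun p => if p.2 = o₀ then 1 else 0) with hC0
  set C1 : Matrix (I × O) (I × O) ℂ :=
    Matrix.diagonal (fun p => if p.2 = o₁ then 1 else 0) with hC1
  set Cm : Matrix (I × O) (I × O) ℂ :=
    Matrix.diagonal (fun p => if p.2 = o₀ ∨ p.2 = o₁ then (1/2 : ℂ) else 0) with hCm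
  have hdiagtr : ∀ (f : O → ℂ), ptrace2 (Matrix.diagonal (fun p : I × O => f p.2))
      = Matrix.diagonal (fun _ : I => ∑ o : O, f o) := by
    intro f
    ext i j
    rcases eq_or_ne i j with h | h
    · subst h
      simp [ptrace2, Matrix.diagonal]
    · simp [ptrace2, Matrix.diagonal, h, Prod.ext_iff]
  have hC0psd : C0.PosSemidef := Matrix.posSemidef_diagonal_iff.mpr
    (fun p => by by_cases h : p.2 = o₀ <;> simp [h])
  have hC1psd : C1.PosSemidef := Matrix.posSemidef_diagonal_iff.mpr
    (fun p => by by_cases h : p.2 = o₁ <;> simp [h])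
  have hhalf : (0 : ℂ) ≤ 2⁻¹ := by
    have := Complex.zero_le_real.mpr (by norm_num : (0:ℝ) ≤ 2⁻¹)
    simpa using this
  have hCmpsd : Cm.PosSemidef := Matrix.posSemidef_diagonal_iff.mpr
    (fun p => by by_cases h : p.2 = o₀ ∨ p.2 = o₁ <;> simp [h, hhalf])
  have hC0tr : ptrace2 C0 = 1 := by
    rw [hC0, hdiagtr (fun o => if o = o₀ then 1 else 0)]
    simp
  have hC1tr : ptrace2 C1 = 1 := by
    rw [hC1, hdiagtr (fun o => if o = o₁ then 1 else 0)]
    simp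
  have hCmtr : ptrace2 Cm = 1 := by
    rw [hCm, hdiagtr (fun o => if o = o₀ ∨ o = o₁ then (1/2 : ℂ) else 0)]
    have hsum : ∑ o : O, (if o = o₀ ∨ o = o₁ then (1/2 : ℂ) else 0) = 1 := by
      have hterm : ∀ o : O, (if o = o₀ ∨ o = o₁ then (1/2 : ℂ) else 0)
          = (if o = o₀ then (1/2 : ℂ) else 0) + (if o = o₁ then (1/2 : ℂ) else 0) := by
        intro o
        rcases eq_or_ne o o₀ with h0 | h0 <;> rcases eq_or_ne o o₁ with h1 | h1 <;>
          simp_all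
      rw [Finset.sum_congr rfl (fun o _ => hterm o), Finset.sum_add_distrib]
      simp
      norm_num
    rw [hsum, Matrix.diagonal_one]
  have hCmid : Cm = (1/2 : ℂ) • C0 + (1/2 : ℂ) • C1 := by
    ext p q
    rcases eq_or_ne p q with h | h
    · subst h
      simp only [hCm, hC0, hC1, Matrix.diagonal_apply_eq, Matrix.add_apply, Matrix.smul_apply,
        smul_eq_mul]
      rcases eq_or_ne p.2 o₀ with h0 | h0 <;> rcases eq_or_ne p.2 o₁ with h1 | h1 <;>
        simp_all
    · simp [hCm, hC0, hC1, Matrix.diagonal_apply_ne _ h]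
  obtain ⟨hApsd, hArk, hAtr⟩ := hQ C0 hC0psd hC0tr
  obtain ⟨hBpsd, hBrk, hBtr⟩ := hQ C1 hC1psd hC1tr
  obtain ⟨hMpsd, hMrk, hMtr⟩ := hQ Cm hCmpsd hCmtr
  set A := Q C0 with hA
  set B := Q C1 with hB
  have hQCm : Q Cm = (1/2 : ℂ) • A + (1/2 : ℂ) • B := by
    rw [hCmid, map_add, map_smul, map_smul]
  set n : ℂ := (Fintype.card I : ℂ) with hn
  have hn0 : n ≠ 0 := by
    simp only [hn, Ne, Nat.cast_eq_zero]
    exact Fintype.card_ne_zero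
  have htrfC : ∀ (o' : O),
      (Matrix.diagonal (fun p : I × O => if p.2 = o' then (1:ℂ) else 0)).trace = n := by
    intro o'
    rw [Matrix.trace_diagonal, Fintype.sum_prod_type]
    simp [hn]
  have htrA : A.trace = n := by
    have h1 := congrArg Matrix.trace hAtr
    rw [trace_ptrace2] at h1
    rw [h1, hC0, htrfC]
  have htrB : B.trace = n := by
    have h1 := congrArg Matrix.trace hBtr
    rw [trace_ptrace2] at h1
    rw [h1, hC1, htrfC]
  have htrM : (Q Cm).trace = n := by
    have h1 := congrArg Matrix.trace hMtr
    rw [trace_ptrace2] at h1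
    have hc0 : C0.trace = n := by rw [hC0, htrfC]
    have hc1 : C1.trace = n := by rw [hC1, htrfC]
    rw [h1, hCmid]
    simp only [Matrix.trace_add, Matrix.trace_smul, smul_eq_mul]
    rw [hc0, hc1]
    ring
  have hA2 : A * A = n • A := by
    have h1 := sq_eq_trace_smul_of_rank_one hApsd.1 hArk
    rwa [htrA] at h1
  have hB2 : B * B = n • B := by
    have h1 := sq_eq_trace_smul_of_rank_one hBpsd.1 hBrk
    rwa [htrB] at h1
  have hM2 : (Q Cm) * (Q Cm) = n • (Q Cm) := by
    have h1 := sq_eq_trace_smul_of_rank_one hMpsd.1 hMrk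
    rwa [htrM] at h1
  -- expand the midpoint square to get tr(AB) = n^2
  have htrAB : (A * B).trace = n * n := by
    have hexp : (1/4 : ℂ) • (A*A + A*B + B*A + B*B)
        = n • ((1/2 : ℂ) • A + (1/2 : ℂ) • B) := by
      rw [← hQCm, ← hM2, hQCm]
      rw [Matrix.add_mul, Matrix.mul_add, Matrix.mul_add]
      rw [Matrix.smul_mul, Matrix.smul_mul, Matrix.mul_smul, Matrix.mul_smul]
      rw [smul_smul, smul_smul]
      norm_num
      module
    rw [hA2, hB2] at hexp
    have h1 := congrArg Matrix.trace hexp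
    simp only [Matrix.trace_add, Matrix.trace_smul, htrA, htrB,
      Matrix.trace_mul_comm B A, smul_eq_mul] at h1
    linear_combination 2 * h1
  -- Frobenius norm of A - B vanishes, so A = B
  have hAB : A = B := by
    have hherm : Matrix.conjTranspose (A - B) = A - B := by
      rw [Matrix.conjTranspose_sub, hApsd.1, hBpsd.1]
    have hz : (Matrix.conjTranspose (A - B) * (A - B)).trace = 0 := by
      rw [hherm, Matrix.sub_mul, Matrix.mul_sub, Matrix.mul_sub, hA2, hB2]
      simp only [Matrix.trace_sub, Matrix.trace_smul, htrA, htrB,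
        Matrix.trace_mul_comm B A, smul_eq_mul, htrAB]
      ring
    exact sub_eq_zero.mp (eq_zero_of_trace_conjTranspose_mul_self _ hz)
  -- hence C0 = C1, contradicting o₀ ≠ o₁
  have hCC : C0 = C1 := by rw [← hAtr, ← hBtr, hAB]
  obtain ⟨i0⟩ := (inferInstance : Nonempty I)
  have hval := congrFun (congrFun hCC (i0, o₀)) (i0, o₀)
  simp [hC0, hC1, ho] at hval
end

section
/- Von Neumann trace inequality specialization: for positive semidefinite operators A, B on a finite-dimensional Hilbert space of dimension n, max over unitaries U of Tr(A U B U*) equals Σᵢ aᵢ↓ bᵢ↓, where aᵢ↓ and bᵢ↓ are the eigenvalues of A and B in non-increasing order. -/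
open scoped BigOperators ComplexOrder

/-!
Diagonalize `A = P diag(a) P*` and `B = Q diag(b) Q*`. Then `Re Tr(A U B U*) = ∑ᵢⱼ aᵢ bⱼ |Vᵢⱼ|²`
with `V = P* U Q` unitary, so `(|Vᵢⱼ|²)` is doubly stochastic. By Birkhoff's theorem the doubly
stochastic matrices are the convex hull of the permutation matrices, so this linear expression is
at most `∑ᵢ aᵢ b_{σ i}` for some permutation `σ`, which the rearrangement inequality bounds by the
sum over the sorted eigenvalues. Conversely permutation matrices are unitary, so `U = P σ Q*`
attains `∑ᵢ aᵢ b_{σ i}` for every `σ`.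
-/

open Matrix

lemma isGreatest_range_sum_mul_comp_perm {m : ℕ} (f g : Fin m → ℝ) :
    IsGreatest (Set.range fun σ : Equiv.Perm (Fin m) => ∑ i, f i * g (σ i))
      (∑ i : Fin m, (f ∘ Tuple.sort f) i.rev * (g ∘ Tuple.sort g) i.rev) := by
  set τf : Equiv.Perm (Fin m) := Fin.revPerm.trans (Tuple.sort f)
  set τg : Equiv.Perm (Fin m) := Fin.revPerm.trans (Tuple.sort g)
  have hmono : Monovary (f ∘ τf) (g ∘ τg) :=
    ((Tuple.monotone_sort f).comp_antitone Fin.rev_anti).monovary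
      ((Tuple.monotone_sort g).comp_antitone Fin.rev_anti)
  refine ⟨⟨τf.symm.trans τg, ?_⟩, ?_⟩
  · exact (Equiv.sum_comp τf _).symm.trans (by simp [τf, τg])
  · rintro _ ⟨σ, rfl⟩
    calc ∑ i, f i * g (σ i) = ∑ k, (f ∘ τf) k * (g ∘ τg) ((τf.trans σ).trans τg.symm k) := by
          rw [← Equiv.sum_comp τf]; simp
      _ ≤ _ := hmono.sum_mul_comp_perm_le_sum_mul

lemma map_norm_sq_permMatrix {n 𝕜 : Type*} [DecidableEq n] [RCLike 𝕜] (σ : Equiv.Perm n) :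
    (σ.permMatrix 𝕜).map (‖·‖ ^ 2) = σ.permMatrix ℝ := by
  ext i j
  simp [PEquiv.toMatrix_apply, apply_ite]

section
variable {n : Type*} [Fintype n] [DecidableEq n]

lemma exists_perm_dotProduct_mulVec_le_of_mem_doublyStochastic {D : Matrix n n ℝ}
    (hD : D ∈ doublyStochastic ℝ n) (f g : n → ℝ) :
    ∃ σ : Equiv.Perm n, f ⬝ᵥ D *ᵥ g ≤ ∑ i, f i * g (σ i) := by
  rw [← SetLike.mem_coe, doublyStochastic_eq_convexHull_permMatrix] at hD
  have hlin : ConvexOn ℝ Set.univ fun M : Matrix n n ℝ => f ⬝ᵥ M *ᵥ g :=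
    ⟨convex_univ, fun M _ N _ s t _ _ _ => le_of_eq <| by
      simp [add_mulVec, smul_mulVec, dotProduct_add, dotProduct_smul]⟩
  obtain ⟨_, ⟨σ, rfl⟩, hσ⟩ := hlin.exists_ge_of_mem_convexHull (Set.subset_univ _) hD
  exact ⟨σ, by simpa [permMatrix_mulVec, dotProduct] using hσ⟩

variable {𝕜 : Type*} [RCLike 𝕜]

lemma permMatrix_mem_unitaryGroup (σ : Equiv.Perm n) : σ.permMatrix 𝕜 ∈ unitaryGroup n 𝕜 := by
  rw [mem_unitaryGroup_iff', star_eq_conjTranspose, conjTranspose_permMatrix, ← permMatrix_mul]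
  simp

lemma sum_norm_sq_apply_of_mem_unitaryGroup {V : Matrix n n 𝕜} (hV : V ∈ unitaryGroup n 𝕜)
    (i : n) : ∑ j, ‖V i j‖ ^ 2 = 1 := by
  have h := congr_fun₂ (mem_unitaryGroup_iff.1 hV) i i
  simp only [mul_apply, star_apply, one_apply_eq, RCLike.star_def, RCLike.mul_conj] at h
  exact_mod_cast h

lemma map_norm_sq_mem_doublyStochastic {V : Matrix n n 𝕜} (hV : V ∈ unitaryGroup n 𝕜) :
    V.map (‖·‖ ^ 2) ∈ doublyStochastic ℝ n := by
  refine mem_doublyStochastic_iff_sum.2 ⟨fun i j => sq_nonneg ‖V i j‖,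
    sum_norm_sq_apply_of_mem_unitaryGroup hV, fun j => ?_⟩
  simpa using sum_norm_sq_apply_of_mem_unitaryGroup (Unitary.star_mem hV) j

lemma trace_diagonal_mul_mul_diagonal_mul_star (a b : n → ℝ) (V : Matrix n n 𝕜) :
    (diagonal (RCLike.ofReal ∘ a) * V * diagonal (RCLike.ofReal ∘ b) * star V).trace
      = ((a ⬝ᵥ V.map (‖·‖ ^ 2) *ᵥ b : ℝ) : 𝕜) := by
  simp only [trace, diag_apply, mul_apply (N := star V), mul_diagonal, diagonal_mul, dotProduct,
    mulVec, map_apply, Function.comp_apply, Finset.mul_sum, star_apply, RCLike.star_def]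
  push_cast
  refine Finset.sum_congr rfl fun i _ => Finset.sum_congr rfl fun j _ => ?_
  rw [← RCLike.mul_conj]
  ring

namespace Matrix.IsHermitian

variable {A B : Matrix n n 𝕜}

lemma trace_mul_mul_mul_star_eq (hA : A.IsHermitian) (hB : B.IsHermitian) (U : Matrix n n 𝕜) :
    (A * U * B * star U).trace = ((hA.eigenvalues ⬝ᵥ
      (star (hA.eigenvectorUnitary : Matrix n n 𝕜) * U * hB.eigenvectorUnitary).map (‖·‖ ^ 2)
        *ᵥ hB.eigenvalues : ℝ) : 𝕜) := by
  rw [← trace_diagonal_mul_mul_diagonal_mul_star]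
  conv_lhs => rw [hA.spectral_theorem, hB.spectral_theorem]
  simp only [Unitary.conjStarAlgAut_apply, star_mul, star_star, Matrix.mul_assoc]
  rw [trace_mul_comm]
  simp only [Matrix.mul_assoc]

lemma exists_perm_re_trace_mul_mul_mul_star_le (hA : A.IsHermitian) (hB : B.IsHermitian)
    {U : Matrix n n 𝕜} (hU : U ∈ unitaryGroup n 𝕜) :
    ∃ σ : Equiv.Perm n,
      RCLike.re (A * U * B * star U).trace ≤ ∑ i, hA.eigenvalues i * hB.eigenvalues (σ i) := by
  rw [hA.trace_mul_mul_mul_star_eq hB, RCLike.ofReal_re]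
  refine exists_perm_dotProduct_mulVec_le_of_mem_doublyStochastic
    (map_norm_sq_mem_doublyStochastic ?_) _ _
  exact mul_mem (mul_mem (star hA.eigenvectorUnitary).2 hU) hB.eigenvectorUnitary.2

lemma exists_unitary_re_trace_mul_mul_mul_star_eq (hA : A.IsHermitian) (hB : B.IsHermitian)
    (σ : Equiv.Perm n) :
    ∃ U ∈ unitaryGroup n 𝕜,
      RCLike.re (A * U * B * star U).trace = ∑ i, hA.eigenvalues i * hB.eigenvalues (σ i) := by
  set P := hA.eigenvectorUnitary
  set Q := hB.eigenvectorUnitary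
  refine ⟨P * σ.permMatrix 𝕜 * star (Q : Matrix n n 𝕜),
    mul_mem (mul_mem P.2 (permMatrix_mem_unitaryGroup σ)) (star Q).2, ?_⟩
  have hV : star (P : Matrix n n 𝕜) * (P * σ.permMatrix 𝕜 * star (Q : Matrix n n 𝕜)) * Q =
      σ.permMatrix 𝕜 := by
    simp only [← Matrix.mul_assoc, Unitary.coe_star_mul_self, Matrix.one_mul]
    simp only [Matrix.mul_assoc, Unitary.coe_star_mul_self, Matrix.mul_one]
  rw [hA.trace_mul_mul_mul_star_eq hB, RCLike.ofReal_re, hV, map_norm_sq_permMatrix,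
    permMatrix_mulVec]
  rfl

end Matrix.IsHermitian
end

/-- Von Neumann trace inequality for positive semidefinite matrices: the maximum of
`Tr(A U B U*)` over unitaries `U` is the sum of products of the eigenvalues of `A`
and `B` arranged in non-increasing order. -/
theorem stmt10 {m : ℕ} (A B : Matrix (Fin m) (Fin m) ℂ)
    (hA : A.PosSemidef) (hB : B.PosSemidef) :
    letI aSorted : Fin m → ℝ :=
      fun i => (hA.1.eigenvalues ∘ Tuple.sort hA.1.eigenvalues) i.rev
    letI bSorted : Fin m → ℝ :=
      fun i => (hB.1.eigenvalues ∘ Tuple.sort hB.1.eigenvalues) i.rev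
    IsGreatest
      {x : ℝ | ∃ U ∈ Matrix.unitaryGroup (Fin m) ℂ,
        x = (A * U * B * star U).trace.re}
      (∑ i, aSorted i * bSorted i) := by
  obtain ⟨⟨σ, hσ⟩, hmax⟩ := isGreatest_range_sum_mul_comp_perm hA.1.eigenvalues hB.1.eigenvalues
  refine ⟨?_, ?_⟩
  · obtain ⟨U, hU, hUσ⟩ := hA.1.exists_unitary_re_trace_mul_mul_mul_star_eq hB.1 σ
    exact ⟨U, hU, hσ.symm.trans hUσ.symm⟩
  · rintro _ ⟨U, hU, rfl⟩
    obtain ⟨τ, hτ⟩ := hA.1.exists_perm_re_trace_mul_mul_mul_star_le hB.1 hU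
    exact hτ.trans (hmax ⟨τ, rfl⟩)
end
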